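/- Let X• be a simplicial space which is simplicially NDR. Then for 0 ≤ r ≤ n − 1 there is a homeomorphism γ(n,r) : ⋁_J ŝ_J(X_{n−r}) → S^r(X_n)/S^{r+1}(X_n), natural for morphisms of simplicial spaces, where J ranges over the admissible sequences J = (j_r, j_{r−1}, …, j_1) with |J| = r (and where S^n(X_n) = s_0^n(X_0)). -/

import Mathlib

universe u v

/-- An NDR pair `(Z, A)`, in the sense of May. -/
def IsNDRPair {Z : Type u} [TopologicalSpace Z] (A : Set Z) : Prop :=
  ∃ (u : C(Z, unitInterval)) (h : C(Z × unitInterval, Z)),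
    A = u ⁻¹' {0} ∧ (∀ z, h (z, 0) = z) ∧ (∀ a ∈ A, ∀ t, h (a, t) ∈ A) ∧
    ∀ z, u z < 1 → h (z, 1) ∈ A

/-- A strong NDR pair `(Z, A)`, in the sense of May. -/
def IsStrongNDRPair {Z : Type u} [TopologicalSpace Z] (A : Set Z) : Prop :=
  ∃ (u : C(Z, unitInterval)) (h : C(Z × unitInterval, Z)),
    A = u ⁻¹' {0} ∧ (∀ z, h (z, 0) = z) ∧ (∀ a ∈ A, ∀ t, h (a, t) ∈ A) ∧
    (∀ z, u z < 1 → h (z, 1) ∈ A) ∧ ∀ z t, u z < 1 → u (h (z, t)) < 1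

/-- A cofibration: a map having the homotopy extension property with respect to all spaces. -/
def IsCofibration {A X : Type u} [TopologicalSpace A] [TopologicalSpace X] (i : C(A, X)) : Prop :=
  ∀ (Z : Type u) [TopologicalSpace Z] (f : C(X, Z)) (H : C(A × unitInterval, Z)),
    (∀ a, H (a, 0) = f (i a)) →
    ∃ G : C(X × unitInterval, Z), (∀ x, G (x, 0) = f x) ∧ ∀ a t, G (i a, t) = H (a, t)

/-- `f` is a homotopy equivalence. -/
def IsHtpyEquiv {A : Type u} {B : Type v} [TopologicalSpace A] [TopologicalSpace B]
    (f : C(A, B)) : Prop :=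
  ∃ g : C(B, A), (g.comp f).Homotopic (ContinuousMap.id A) ∧
    (f.comp g).Homotopic (ContinuousMap.id B)

/-- A pointed topological space. -/
structure PSpace : Type (u + 1) where
  carrier : Type u
  top : TopologicalSpace carrier
  pt : carrier

attribute [instance] PSpace.top

/-- Points of `Z ⊕ *` which get identified when collapsing `A ⊆ Z`. -/
def collapseGood {Z : Type u} (A : Set Z) : Z ⊕ Unit → Prop :=
  Sum.elim (· ∈ A) fun _ => True

/-- The setoid on `Z ⊕ *` which identifies all points of `A` with the added point. -/
def collapseSetoid {Z : Type u} (A : Set Z) : Setoid (Z ⊕ Unit) where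
  r x y := x = y ∨ (collapseGood A x ∧ collapseGood A y)
  iseqv := by
    constructor
    · exact fun x => Or.inl rfl
    · rintro x y (rfl | ⟨h1, h2⟩)
      · exact Or.inl rfl
      · exact Or.inr ⟨h2, h1⟩
    · rintro x y z (rfl | ⟨h1, h2⟩) h
      · exact h
      · rcases h with rfl | ⟨h3, h4⟩
        · exact Or.inr ⟨h1, h2⟩
        · exact Or.inr ⟨h1, h4⟩

/-- The pointed quotient `Z/A`: the quotient of `Z ⊔ *` identifying all of `A ∪ {*}` to a
single point, which serves as basepoint.  (When `A = ∅` this is `Z` with a disjoint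
basepoint added.) -/
def Collapse {Z : Type u} [TopologicalSpace Z] (A : Set Z) : PSpace.{u} where
  carrier := Quotient (collapseSetoid A)
  top := instTopologicalSpaceQuotient
  pt := Quotient.mk _ (Sum.inr ())

/-- The canonical map `Z → Z/A`. -/
def Collapse.mk {Z : Type u} [TopologicalSpace Z] (A : Set Z) (z : Z) : (Collapse A).carrier :=
  Quotient.mk _ (Sum.inl z)

/-- `Z` with a disjoint basepoint added. -/
def plusP (Z : Type u) [TopologicalSpace Z] : PSpace.{u} := Collapse (∅ : Set Z)

/-- The reduced suspension of a pointed space. -/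
def Susp (P : PSpace.{u}) : PSpace.{u} :=
  Collapse {q : P.carrier × unitInterval | q.2 = 0 ∨ q.2 = 1 ∨ q.1 = P.pt}

/-- The canonical map `P × [0,1] → Σ P`. -/
def Susp.mk (P : PSpace.{u}) (z : P.carrier) (t : unitInterval) : (Susp P).carrier :=
  Collapse.mk _ (z, t)

/-- The wedge (one point union) of a family of pointed spaces. -/
def Wedge {ι : Type v} (P : ι → PSpace.{u}) : PSpace.{max u v} :=
  Collapse {x : Σ i, (P i).carrier | x.2 = (P x.1).pt}

/-- The canonical map from a summand into the wedge. -/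
def Wedge.mk {ι : Type v} (P : ι → PSpace.{u}) (i : ι) (z : (P i).carrier) :
    (Wedge P).carrier :=
  Collapse.mk _ ⟨i, z⟩

/-- `G` is the map of suspensions induced by the pointed map `g`. -/
def SuspExtends {P Q : PSpace.{u}} (g : P.carrier → Q.carrier)
    (G : (Susp P).carrier → (Susp Q).carrier) : Prop :=
  (∀ z t, G (Susp.mk P z t) = Susp.mk Q (g z) t) ∧ G (Susp P).pt = (Susp Q).pt

/-- `G` is the map of `j`-fold suspensions induced by the map `g`. -/
def SuspIterExtends : (j : ℕ) → (P Q : PSpace.{u}) → (P.carrier → Q.carrier) →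
    ((Susp^[j] P).carrier → (Susp^[j] Q).carrier) → Prop
  | 0, _, _, g, G => G = g
  | j + 1, P, Q, g, G =>
      ∃ g' : (Susp P).carrier → (Susp Q).carrier,
        SuspExtends g g' ∧ SuspIterExtends j (Susp P) (Susp Q) g' G

/-- `G` is the map of wedges induced by the family of maps `g i`. -/
def WedgeInduced {ι : Type v} (P Q : ι → PSpace.{u}) (g : ∀ i, (P i).carrier → (Q i).carrier)
    (G : (Wedge P).carrier → (Wedge Q).carrier) : Prop :=
  (∀ i z, G (Wedge.mk P i z) = Wedge.mk Q i (g i z)) ∧ G (Wedge P).pt = (Wedge Q).pt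

/-- `g` is the map of collapses induced by `f : Z → W`. -/
def CollapseInduced {Z : Type u} {W : Type v} [TopologicalSpace Z] [TopologicalSpace W]
    (A : Set Z) (B : Set W) (f : Z → W)
    (g : (Collapse A).carrier → (Collapse B).carrier) : Prop :=
  (∀ z, g (Collapse.mk A z) = Collapse.mk B (f z)) ∧ g (Collapse A).pt = (Collapse B).pt

/-- A simplicial space: a sequence of topological spaces with continuous face and
degeneracy maps satisfying the simplicial identities.  The maps `d n i : X (n+1) → X n`
and `s n i : X n → X (n+1)` carry ℕ-valued indices; only the values with
`i ≤ n + 1` (resp. `i ≤ n`) are meaningful, and the simplicial identities are imposed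
exactly in that range. -/
structure SimplicialSpace : Type (u + 1) where
  X : ℕ → Type u
  top : ∀ n, TopologicalSpace (X n)
  d : ∀ n, ℕ → X (n + 1) → X n
  s : ∀ n, ℕ → X n → X (n + 1)
  continuous_d : ∀ n i, Continuous (d n i)
  continuous_s : ∀ n i, Continuous (s n i)
  dd : ∀ n i j, i < j → j ≤ n + 2 → ∀ x, d n i (d (n + 1) j x) = d n (j - 1) (d (n + 1) i x)
  ss : ∀ n i j, i ≤ j → j ≤ n → ∀ x, s (n + 1) i (s n j x) = s (n + 1) (j + 1) (s n i x)
  ds_lt : ∀ n i j, i < j → j ≤ n + 1 → ∀ x,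
    d (n + 1) i (s (n + 1) j x) = s n (j - 1) (d n i x)
  ds_eq : ∀ n j, j ≤ n → ∀ x, d n j (s n j x) = x
  ds_eq' : ∀ n j, j ≤ n → ∀ x, d n (j + 1) (s n j x) = x
  ds_gt : ∀ n i j, j + 1 < i → i ≤ n + 2 → ∀ x,
    d (n + 1) i (s (n + 1) j x) = s n j (d n (i - 1) x)

attribute [instance] SimplicialSpace.top

namespace SimplicialSpace

/-- A morphism of simplicial spaces. -/
structure Hom (X Y : SimplicialSpace.{u}) : Type u where
  f : ∀ n, X.X n → Y.X n
  continuous_f : ∀ n, Continuous (f n)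
  comm_d : ∀ n i, i ≤ n + 1 → ∀ x, f n (X.d n i x) = Y.d n i (f (n + 1) x)
  comm_s : ∀ n i, i ≤ n → ∀ x, f (n + 1) (X.s n i x) = Y.s n i (f n x)

/-- For a sequence `I = (i_r, …, i_1)` (as the list `[i_r, …, i_1]`), the composite
degeneracy `s_I = s_{i_r} ∘ ⋯ ∘ s_{i_1} : X_m → X_{m + r}`. -/
def sComp (X : SimplicialSpace.{u}) : (I : List ℕ) → (m : ℕ) → X.X m → X.X (m + I.length)
  | [], _, y => y
  | i :: I', m, y => X.s (m + I'.length) i (sComp X I' m y)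

/-- For a sequence `I = (i_r, …, i_1)` (as the list `[i_r, …, i_1]`), the composite
face map `d_{χ(I)} = d_{i_1} ∘ d_{i_2} ∘ ⋯ ∘ d_{i_r} : X_{m+r} → X_m` (so `d_{i_r}` is
applied first). -/
def dComp (X : SimplicialSpace.{u}) : (I : List ℕ) → (m : ℕ) → X.X (m + I.length) → X.X m
  | [], _, x => x
  | i :: I', m, x => dComp X I' m (X.d (m + I'.length) i x)

/-- The sequence `I = (i_r, …, i_1)` consists of indices which are in range for the
composite degeneracy `s_I : X_m → X_{m+r}`. -/
def ValidSeq : List ℕ → ℕ → Prop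
  | [], _ => True
  | i :: I', m => i ≤ m + I'.length ∧ ValidSeq I' m

/-- The decreasing degeneracy filtration: `filtS X t n` is the subspace
`S^t(X_n) ⊆ X_n`, the union of the images of all `t`-fold composites of degeneracy
maps.  (`S^0(X_n) = X_n`.) -/
def filtS (X : SimplicialSpace.{u}) : (t : ℕ) → (n : ℕ) → Set (X.X n)
  | 0, _ => Set.univ
  | t + 1, n => {x | ∃ (m : ℕ) (hm : m + 1 = n) (i : ℕ), i ≤ m ∧
      ∃ y ∈ filtS X t m, cast (congrArg X.X hm) (X.s m i y) = x}

lemma filtS_succ_subset (X : SimplicialSpace.{u}) :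
    ∀ (t n : ℕ), X.filtS (t + 1) n ⊆ X.filtS t n := by
  intro t
  induction t with
  | zero => intro n x _; exact Set.mem_univ x
  | succ t ih =>
      rintro n x ⟨m, rfl, i, hi, y, hy, rfl⟩
      exact ⟨m, rfl, i, hi, y, ih m hy, rfl⟩

lemma filtS_antitone (X : SimplicialSpace.{u}) {t t' : ℕ} (h : t ≤ t') (n : ℕ) :
    X.filtS t' n ⊆ X.filtS t n := by
  induction h with
  | refl => exact fun x hx => hx
  | step _ ih => exact fun x hx => ih (X.filtS_succ_subset _ n hx)

end SimplicialSpace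
namespace SimplicialSpace

/-- The composite degeneracy `s_I`, regarded as a map `X_{n - r} → X_n` where `r = |I|`. -/
def sFromTo (X : SimplicialSpace.{u}) (I : List ℕ) (n : ℕ) (h : I.length ≤ n) :
    X.X (n - I.length) → X.X n :=
  fun y => cast (congrArg X.X (Nat.sub_add_cancel h)) (X.sComp I (n - I.length) y)

/-- The composite face map `d_{χ(I)}`, regarded as a map `X_n → X_{n - r}` where `r = |I|`. -/
def dFromTo (X : SimplicialSpace.{u}) (I : List ℕ) (n : ℕ) (h : I.length ≤ n) :
    X.X n → X.X (n - I.length) :=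
  fun x => X.dComp I (n - I.length) (cast (congrArg X.X (Nat.sub_add_cancel h).symm) x)

/-- The image `s_I(X_{n-r}) ⊆ X_n`. -/
def sImage (X : SimplicialSpace.{u}) (I : List ℕ) (n : ℕ) (h : I.length ≤ n) : Set (X.X n) :=
  Set.range (X.sFromTo I n h)

/-- The pointed space `ŝ_I(X_{n-r}) = s_I(X_{n-r}) / s_I S(X_{n-r})`. -/
def sHat (X : SimplicialSpace.{u}) (I : List ℕ) (n : ℕ) (h : I.length ≤ n) : PSpace.{u} :=
  Collapse {x : ↥(X.sImage I n h) |
    (x : X.X n) ∈ X.sFromTo I n h '' X.filtS 1 (n - I.length)}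

/-- The pointed filtration quotient `S^r(X_n)/S^{r+1}(X_n)`. -/
def filtQuot (X : SimplicialSpace.{u}) (n r : ℕ) : PSpace.{u} :=
  Collapse {x : ↥(X.filtS r n) | (x : X.X n) ∈ X.filtS (r + 1) n}

/-- `X` is simplicially NDR: each pair `(S^t(X_n), S^{t+1}(X_n))` is an NDR pair. -/
def SimpliciallyNDR (X : SimplicialSpace.{u}) : Prop :=
  ∀ n t, IsNDRPair {x : ↥(X.filtS t n) | (x : X.X n) ∈ X.filtS (t + 1) n}

/-- `X` is proper: each pair `(X_n, S(X_n))` is a strong NDR pair. -/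
def Proper (X : SimplicialSpace.{u}) : Prop := ∀ n, IsStrongNDRPair (X.filtS 1 n)

/-- `g` is the map `S^r(X_n)/S^{r+1}(X_n) → S^r(Y_n)/S^{r+1}(Y_n)` induced by the
morphism `f : X → Y` of simplicial spaces. -/
def FiltQuotInduced {X Y : SimplicialSpace.{u}} (f : X.Hom Y) (n r : ℕ)
    (g : (X.filtQuot n r).carrier → (Y.filtQuot n r).carrier) : Prop :=
  (∀ (x : X.X n) (hx : x ∈ X.filtS r n) (hfx : f.f n x ∈ Y.filtS r n),
      g (Collapse.mk _ ⟨x, hx⟩) = Collapse.mk _ ⟨f.f n x, hfx⟩) ∧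
  g (X.filtQuot n r).pt = (Y.filtQuot n r).pt

/-- `g` is the map `ŝ_I(X_{n-r}) → ŝ_I(Y_{n-r})` induced by the morphism `f : X → Y`. -/
def SHatInduced {X Y : SimplicialSpace.{u}} (f : X.Hom Y) (I : List ℕ) (n : ℕ)
    (h : I.length ≤ n)
    (g : (X.sHat I n h).carrier → (Y.sHat I n h).carrier) : Prop :=
  (∀ y : X.X (n - I.length),
      g (Collapse.mk _ ⟨X.sFromTo I n h y, Set.mem_range_self y⟩) =
        Collapse.mk _ ⟨Y.sFromTo I n h (f.f (n - I.length) y), Set.mem_range_self _⟩) ∧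
  g (X.sHat I n h).pt = (Y.sHat I n h).pt

end SimplicialSpace

/-- Admissible sequences `(j_r > j_{r-1} > ⋯ > j_1)` of length `r` with entries `< b`,
encoded as strictly decreasing lists. -/
def AdmSeq (r b : ℕ) : Type :=
  {J : List ℕ // J.length = r ∧ J.Pairwise (· > ·) ∧ ∀ i ∈ J, i < b}

/-- Strict lexicographic order on sequences of equal length (comparing from the left,
i.e. at the largest entries first): `I < J` iff they agree above position `p` and
`i_p < j_p`. -/
def SeqLexLT : List ℕ → List ℕ → Prop
  | _, [] => False
  | [], _ :: _ => False
  | i :: I', j :: J' => i < j ∨ (i = j ∧ SeqLexLT I' J')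
namespace SimplexCategory

/-- The old Mathlib `SimplexCategory.toTopObj`: the topological simplex as a set of
`ℝ≥0`-valued weightings summing to `1`. -/
def toTopObj (x : SimplexCategory) : Set (Fin (x.len + 1) → NNReal) :=
  {f | ∑ i, f i = 1}

/-- The old Mathlib `SimplexCategory.toTopMap`. -/
def toTopMap {x y : SimplexCategory} (f : x ⟶ y) (g : x.toTopObj) : y.toTopObj :=
  ⟨fun i => ∑ j ∈ Finset.univ.filter (fun j => f j = i), g.1 j, by
    show ∑ i, ∑ j ∈ Finset.univ.filter (fun j => f j = i), g.1 j = 1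
    rw [Finset.sum_fiberwise]; exact g.2⟩

end SimplexCategory

/-- The topological standard `n`-simplex. -/
abbrev TopSimplex (n : ℕ) : Type :=
  ↥(SimplexCategory.toTopObj (SimplexCategory.mk n))

namespace SimplicialSpace

/-- The disjoint union `⊔ₙ Xₙ × Δⁿ` from which the geometric realization is formed. -/
def RealPre (X : SimplicialSpace.{u}) : Type u :=
  Σ n : ℕ, X.X n × TopSimplex n

instance (X : SimplicialSpace.{u}) : TopologicalSpace (RealPre X) := by
  unfold RealPre; infer_instance

/-- The identifications defining the geometric realization: `(d_i x, u) ∼ (x, δ^i u)`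
and `(s_i x, u) ∼ (x, σ^i u)`. -/
inductive RealRel (X : SimplicialSpace.{u}) : RealPre X → RealPre X → Prop
  | face (n i : ℕ) (hi : i ≤ n + 1) (x : X.X (n + 1)) (u : TopSimplex n) :
      RealRel X ⟨n, (X.d n i x, u)⟩
        ⟨n + 1, (x, SimplexCategory.toTopMap (SimplexCategory.δ ⟨i, by omega⟩) u)⟩
  | degen (n i : ℕ) (hi : i ≤ n) (x : X.X n) (u : TopSimplex (n + 1)) :
      RealRel X ⟨n + 1, (X.s n i x, u)⟩
        ⟨n, (x, SimplexCategory.toTopMap (SimplexCategory.σ ⟨i, by omega⟩) u)⟩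

/-- The geometric realization `|X|` of a simplicial space. -/
def Realization (X : SimplicialSpace.{u}) : Type u := Quot (RealRel X)

instance (X : SimplicialSpace.{u}) : TopologicalSpace (Realization X) := by
  unfold Realization; infer_instance

/-- The subset of `|X|` of points represented by simplices of dimension `< j`
(so `FleBelow X 0 = ∅` and `FleBelow X (j+1) = F_j|X|`). -/
def FleBelow (X : SimplicialSpace.{u}) (j : ℕ) : Set (Realization X) :=
  {q | ∃ (n : ℕ), n < j ∧ ∃ (x : X.X n) (u : TopSimplex n), q = Quot.mk _ ⟨n, (x, u)⟩}

/-- The skeletal filtration `F_j|X|` of the geometric realization. -/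
def Fle (X : SimplicialSpace.{u}) (j : ℕ) : Set (Realization X) := FleBelow X (j + 1)

/-- The pointed filtration quotient `F_j|X| / F_{j-1}|X|` (for `j = 0` this is
`F_0|X|` with a disjoint basepoint added). -/
def realQuot (X : SimplicialSpace.{u}) (j : ℕ) : PSpace.{u} :=
  Collapse {q : ↥(Fle X j) | (q : Realization X) ∈ FleBelow X j}

/-- `g` is the map `|X| → |Y|` induced by a morphism `f : X → Y` of simplicial spaces. -/
def RealMapInduced {X Y : SimplicialSpace.{u}} (f : X.Hom Y)
    (g : Realization X → Realization Y) : Prop :=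
  ∀ (n : ℕ) (x : X.X n) (u : TopSimplex n),
    g (Quot.mk _ ⟨n, (x, u)⟩) = Quot.mk _ ⟨n, (f.f n x, u)⟩

/-- `g` is the map `F_j|X|/F_{j-1}|X| → F_j|Y|/F_{j-1}|Y|` induced by a morphism
`f : X → Y` of simplicial spaces. -/
def RealQuotInduced {X Y : SimplicialSpace.{u}} (f : X.Hom Y) (j : ℕ)
    (g : (realQuot X j).carrier → (realQuot Y j).carrier) : Prop :=
  ∃ g0 : Realization X → Realization Y, RealMapInduced f g0 ∧
    ∃ hg0 : ∀ q ∈ Fle X j, g0 q ∈ Fle Y j,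
      (∀ (q : Realization X) (hq : q ∈ Fle X j),
        g (Collapse.mk _ ⟨q, hq⟩) = Collapse.mk _ ⟨g0 q, hg0 q hq⟩) ∧
      g (realQuot X j).pt = (realQuot Y j).pt

end SimplicialSpace

/-- The mapping cone of a map `f : A → X`: the quotient of `X ⊔ (A × [0,1])` obtained by
identifying `(a, 0)` with `f a` and collapsing `A × {1}` to a point. -/
inductive ConeRel {A X : Type u} [TopologicalSpace A] [TopologicalSpace X] (f : A → X) :
    (X ⊕ (A × unitInterval)) → (X ⊕ (A × unitInterval)) → Prop
  | glue (a : A) : ConeRel f (Sum.inr (a, 0)) (Sum.inl (f a))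
  | tip (a b : A) : ConeRel f (Sum.inr (a, 1)) (Sum.inr (b, 1))

/-- The mapping cone of `f : A → X`. -/
def MappingCone {A X : Type u} [TopologicalSpace A] [TopologicalSpace X] (f : A → X) :
    Type u :=
  Quot (ConeRel f)

instance {A X : Type u} [TopologicalSpace A] [TopologicalSpace X] (f : A → X) :
    TopologicalSpace (MappingCone f) := by
  unfold MappingCone; infer_instance
/-- An abstract simplicial complex on the vertex set `{1, …, m}` (encoded as `Fin m`):
a collection of finite subsets closed under taking subsets. -/
structure AbsSimplicialComplex (m : ℕ) : Type where
  faces : Set (Finset (Fin m))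
  down_closed : ∀ σ ∈ faces, ∀ τ ⊆ σ, τ ∈ faces

/-- The `n`-simplices of the simplicial set `Δ(K)`: weakly order-preserving
`(n+1)`-tuples of vertices whose underlying set is a simplex of `K`. -/
def DeltaObj {m : ℕ} (K : AbsSimplicialComplex m) (n : ℕ) : Type :=
  {v : Fin (n + 1) → Fin m // Monotone v ∧ Finset.image v Finset.univ ∈ K.faces}

/-- The coface index map `δ_i : [n] → [n+1]` (with out-of-range `i` clamped). -/
def dIdx (n i : ℕ) (k : Fin (n + 1)) : Fin (n + 2) :=
  ⟨if k.1 < i then k.1 else k.1 + 1, by have := k.isLt; split_ifs <;> omega⟩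

/-- The codegeneracy index map `σ_i : [n+1] → [n]` (with out-of-range `i` clamped). -/
def sIdx (n i : ℕ) (k : Fin (n + 2)) : Fin (n + 1) :=
  ⟨if k.1 ≤ min i n then k.1 else k.1 - 1, by
    have := k.isLt; have := Nat.min_le_right i n; split_ifs <;> omega⟩

/-- The simplicial set `Δ(K)` associated to an abstract simplicial complex `K`,
regarded as a simplicial space in which every space is discrete. -/
def DeltaK {m : ℕ} (K : AbsSimplicialComplex m) : SimplicialSpace.{0} where
  X n := DeltaObj K n
  top _ := ⊥
  d n i v := ⟨fun k => v.1 (dIdx n i k),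
    fun a b hab => v.2.1 (by
      simp only [dIdx, Fin.mk_le_mk]
      have := Fin.le_def.mp hab
      split_ifs <;> omega),
    K.down_closed _ v.2.2 _ (Finset.image_subset_iff.mpr fun k _ =>
      Finset.mem_image_of_mem _ (Finset.mem_univ _))⟩
  s n i v := ⟨fun k => v.1 (sIdx n i k),
    fun a b hab => v.2.1 (by
      simp only [sIdx, Fin.mk_le_mk]
      have := Fin.le_def.mp hab
      split_ifs <;> omega),
    K.down_closed _ v.2.2 _ (Finset.image_subset_iff.mpr fun k _ =>
      Finset.mem_image_of_mem _ (Finset.mem_univ _))⟩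
  continuous_d _ _ := continuous_bot
  continuous_s _ _ := continuous_bot
  dd n i j hij hj x := by
    apply Subtype.ext; funext k
    refine congrArg x.1 (Fin.ext ?_)
    simp [dIdx]
    have := k.isLt
    split_ifs <;> omega
  ss n i j hij hj x := by
    apply Subtype.ext; funext k
    refine congrArg x.1 (Fin.ext ?_)
    simp [sIdx]
    have := k.isLt
    split_ifs <;> omega
  ds_lt n i j hij hj x := by
    apply Subtype.ext; funext k
    refine congrArg x.1 (Fin.ext ?_)
    simp [dIdx, sIdx]
    have := k.isLt
    split_ifs <;> omega
  ds_eq n j hj x := by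
    apply Subtype.ext; funext k
    refine congrArg x.1 (Fin.ext ?_)
    simp [dIdx, sIdx]
    have := k.isLt
    split_ifs <;> omega
  ds_eq' n j hj x := by
    apply Subtype.ext; funext k
    refine congrArg x.1 (Fin.ext ?_)
    simp [dIdx, sIdx]
    have := k.isLt
    split_ifs <;> omega
  ds_gt n i j hij hi x := by
    apply Subtype.ext; funext k
    refine congrArg x.1 (Fin.ext ?_)
    simp [dIdx, sIdx]
    have := k.isLt
    split_ifs <;> omega

/-- The geometric realization (polyhedron) `|K|` of an abstract simplicial complex on
`{1, …, m}`: the set of convex weightings of the vertices whose support lies in a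
simplex of `K`, topologized as a subspace of `ℝ^m`. -/
def geomRealSC {m : ℕ} (K : AbsSimplicialComplex m) : Type :=
  {w : Fin m → ℝ // (∀ i, 0 ≤ w i) ∧ (∑ i, w i) = 1 ∧
    ∃ σ ∈ K.faces, ∀ i, w i ≠ 0 → i ∈ σ}

instance {m : ℕ} (K : AbsSimplicialComplex m) : TopologicalSpace (geomRealSC K) := by
  unfold geomRealSC; infer_instance


/-!
Every point of `S^r(X_n)` is `s_J y` for an admissible `J` of length `r`, so the pieces
`s_J(X_{n-r})` cover `S^r(X_n)`. By the Eilenberg–Zilber uniqueness of `s_J y` with `y`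
nondegenerate, two different pieces meet only inside `S^{r+1}(X_n)`, and `s_J(X_{n-r})` meets
`S^{r+1}(X_n)` exactly in `s_J S(X_{n-r})`. Hence the inclusions induce a continuous bijection
`⋁_J ŝ_J(X_{n-r}) → S^r(X_n)/S^{r+1}(X_n)`, natural in `X`. Its inverse is continuous because
the finitely many pieces are closed: the NDR condition makes `S^{t+1}(X_n)` closed in `S^t(X_n)`,
and for a point `s_K q` (`q` nondegenerate) outside `s_j(X_{n-1})` there is a composite face `d_E`
with `d_E s_K = id` and `d_E s_j` degenerate, so `s_K d_E` fixes the point while pushing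
`s_j(X_{n-1})` into the closed set `S^{|K|+1}(X_n)`.
-/

namespace Collapse

variable {Z : Type u} [TopologicalSpace Z] {A : Set Z}

theorem mk_eq_pt {z : Z} (hz : z ∈ A) : Collapse.mk A z = (Collapse A).pt :=
  Quotient.sound (Or.inr ⟨hz, trivial⟩)

theorem mk_or_eq_pt (c : (Collapse A).carrier) :
    (∃ z, c = Collapse.mk A z) ∨ c = (Collapse A).pt := by
  induction c using Quotient.inductionOn with
  | h z =>
    rcases z with z | _
    · exact Or.inl ⟨z, rfl⟩
    · exact Or.inr rfl

theorem continuous_mk : Continuous (Collapse.mk A) :=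
  continuous_quotient_mk'.comp continuous_inl

def lift {T : Type v} (A : Set Z) (f : Z → T) (t₀ : T) (hf : ∀ z ∈ A, f z = t₀) :
    (Collapse A).carrier → T :=
  Quotient.lift (Sum.elim f fun _ => t₀) <| by
    rintro (x | _) (y | _) (h | ⟨hx, hy⟩) <;>
      simp_all [collapseGood]

variable {T : Type v} {f : Z → T} {t₀ : T} {hf : ∀ z ∈ A, f z = t₀}

theorem continuous_lift [TopologicalSpace T] (hfc : Continuous f) :
    Continuous (lift A f t₀ hf) :=
  (hfc.sumElim continuous_const).quotient_lift _

end Collapse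

theorem IsNDRPair.isClosed {Z : Type u} [TopologicalSpace Z] {A : Set Z} (h : IsNDRPair A) :
    IsClosed A := by
  obtain ⟨u, -, rfl, -⟩ := h
  exact isClosed_singleton.preimage u.continuous

namespace Wedge

variable {ι : Type v} {P : ι → PSpace.{u}}

theorem mk_pt (i : ι) : Wedge.mk P i (P i).pt = (Wedge P).pt :=
  Collapse.mk_eq_pt rfl

theorem continuous_mk (i : ι) : Continuous (Wedge.mk P i) :=
  Collapse.continuous_mk.comp continuous_sigmaMk

end Wedge

section WedgeOfCollapses

variable {T : Type u} [TopologicalSpace T] {ι : Type v}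

abbrev wedgeCollapse (C B : ι → Set T) : PSpace.{max u v} :=
  Wedge fun i => Collapse {x : C i | (x : T) ∈ B i}

/-- Conditions under which the inclusions `Cᵢ ⊆ F` exhibit `F/D` as the wedge of the `Cᵢ/Bᵢ`. -/
structure IsWedgeDecomposition (F D : Set T) (C B : ι → Set T) : Prop where
  subset : ∀ i, C i ⊆ F
  inter_eq : ∀ i, C i ∩ D = B i
  cover : F ⊆ ⋃ i, C i
  inter_subset : ∀ i j, i ≠ j → C i ∩ C j ⊆ D
  isClosed : ∀ i, IsClosed (((↑) : F → T) ⁻¹' C i)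

variable {C B : ι → Set T} {F D : Set T}

theorem wedgeCollapse_cases (w : (wedgeCollapse C B).carrier) :
    (∃ i x, w = Wedge.mk (fun i => Collapse {x : C i | (x : T) ∈ B i}) i (Collapse.mk _ x)) ∨
      w = (wedgeCollapse C B).pt := by
  rcases Collapse.mk_or_eq_pt w with ⟨⟨i, c⟩, rfl⟩ | rfl
  · rcases Collapse.mk_or_eq_pt c with ⟨x, rfl⟩ | rfl
    · exact Or.inl ⟨i, x, rfl⟩
    · exact Or.inr (Wedge.mk_pt i)
  · exact Or.inr rfl

namespace IsWedgeDecomposition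

theorem mem_of_mem_inter (h : IsWedgeDecomposition F D C B) {i : ι} {x : T} (hC : x ∈ C i)
    (hD : x ∈ D) : x ∈ B i :=
  h.inter_eq i ▸ ⟨hC, hD⟩

theorem mk_mk_eq_pt (h : IsWedgeDecomposition F D C B) {i : ι} {x : T} (hi : x ∈ C i)
    (hD : x ∈ D) :
    Wedge.mk (fun i => Collapse {x : C i | (x : T) ∈ B i}) i (Collapse.mk _ ⟨x, hi⟩) =
      (wedgeCollapse C B).pt := by
  rw [Collapse.mk_eq_pt (show ⟨x, hi⟩ ∈ {x : C i | (x : T) ∈ B i} from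
    h.mem_of_mem_inter hi hD), Wedge.mk_pt]

theorem mk_mk_eq (h : IsWedgeDecomposition F D C B) {i j : ι} {x : T} (hi : x ∈ C i)
    (hj : x ∈ C j) :
    Wedge.mk (fun i => Collapse {x : C i | (x : T) ∈ B i}) i (Collapse.mk _ ⟨x, hi⟩) =
      Wedge.mk _ j (Collapse.mk _ ⟨x, hj⟩) := by
  rcases eq_or_ne i j with rfl | hij
  · rfl
  have hD := h.inter_subset i j hij ⟨hi, hj⟩
  rw [h.mk_mk_eq_pt hi hD, h.mk_mk_eq_pt hj hD]

theorem subset_right (h : IsWedgeDecomposition F D C B) (i : ι) : B i ⊆ D :=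
  h.inter_eq i ▸ Set.inter_subset_right

noncomputable def toWedge (h : IsWedgeDecomposition F D C B) (x : F) :
    (wedgeCollapse C B).carrier :=
  have hx := Set.mem_iUnion.mp (h.cover x.2)
  Wedge.mk _ hx.choose (Collapse.mk _ ⟨x, hx.choose_spec⟩)

theorem toWedge_eq (h : IsWedgeDecomposition F D C B) {x : F} {i : ι} (hi : (x : T) ∈ C i) :
    h.toWedge x = Wedge.mk _ i (Collapse.mk _ ⟨x, hi⟩) :=
  h.mk_mk_eq _ hi

theorem toWedge_eq_pt (h : IsWedgeDecomposition F D C B) {x : F} (hx : (x : T) ∈ D) :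
    h.toWedge x = (wedgeCollapse C B).pt :=
  h.mk_mk_eq_pt _ hx

theorem continuous_toWedge [Finite ι] (h : IsWedgeDecomposition F D C B) :
    Continuous h.toWedge := by
  refine (locallyFinite_of_finite _).continuous (f := fun i => ((↑) : F → T) ⁻¹' C i)
    (Set.iUnion_eq_univ_iff.mpr fun x => (Set.mem_iUnion.mp (h.cover x.2) : ∃ i, _))
    h.isClosed fun i => ?_
  rw [continuousOn_iff_continuous_domRestrict]
  have : (((↑) : F → T) ⁻¹' C i).domRestrict h.toWedge =
      fun x => Wedge.mk _ i (Collapse.mk _ ⟨x.1.1, x.2⟩) :=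
    funext fun x => h.toWedge_eq x.2
  rw [this]
  exact (Wedge.continuous_mk i).comp (Collapse.continuous_mk.comp (by fun_prop))

def fromSummand (h : IsWedgeDecomposition F D C B) (i : ι) :
    (Collapse {x : C i | (x : T) ∈ B i}).carrier → (Collapse {x : F | (x : T) ∈ D}).carrier :=
  Collapse.lift _ (fun x => Collapse.mk _ ⟨x, h.subset i x.2⟩) _
    fun _ hx => Collapse.mk_eq_pt (h.subset_right i hx)

theorem continuous_fromSummand (h : IsWedgeDecomposition F D C B) (i : ι) :
    Continuous (h.fromSummand i) :=
  Collapse.continuous_lift <| Collapse.continuous_mk.comp <| continuous_subtype_val.subtype_mk _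

def fromWedge (h : IsWedgeDecomposition F D C B) :
    (wedgeCollapse C B).carrier → (Collapse {x : F | (x : T) ∈ D}).carrier :=
  Collapse.lift _ (fun c => h.fromSummand c.1 c.2) _
    fun c hc => by rw [show c.2 = _ from hc]; rfl

noncomputable def homeomorph [Finite ι] (h : IsWedgeDecomposition F D C B) :
    (wedgeCollapse C B).carrier ≃ₜ (Collapse {x : F | (x : T) ∈ D}).carrier where
  toFun := h.fromWedge
  invFun := Collapse.lift _ h.toWedge _ fun _ => h.toWedge_eq_pt
  left_inv w := by
    rcases wedgeCollapse_cases w with ⟨i, x, rfl⟩ | rfl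
    · exact h.toWedge_eq x.2
    · rfl
  right_inv c := by
    rcases Collapse.mk_or_eq_pt c with ⟨x, rfl⟩ | rfl
    · rfl
    · rfl
  continuous_toFun := Collapse.continuous_lift <| continuous_sigma h.continuous_fromSummand
  continuous_invFun := Collapse.continuous_lift h.continuous_toWedge

end IsWedgeDecomposition
end WedgeOfCollapses

abbrev Adm (K : List ℕ) : Prop := K.Pairwise (· > ·)

namespace Adm

variable {k : ℕ} {K : List ℕ}

theorem of_cons (h : Adm (k :: K)) : Adm K := List.Pairwise.of_cons h

theorem lt_head (h : Adm (k :: K)) : ∀ b ∈ K, b < k :=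
  fun b hb => (List.pairwise_cons.mp h).1 b hb

theorem cons (h : Adm K) (hk : ∀ b ∈ K, b < k) : Adm (k :: K) :=
  List.pairwise_cons.mpr ⟨hk, h⟩

theorem length_le (h : Adm (k :: K)) : K.length ≤ k := by
  induction K generalizing k with
  | nil => exact Nat.zero_le _
  | cons k' K ih =>
      have := ih h.of_cons
      have := h.lt_head k' List.mem_cons_self
      simp only [List.length_cons]
      omega

theorem eq_of_subset {I J : List ℕ} (hI : Adm I) (hJ : Adm J) (hIJ : I ⊆ J)
    (hl : J.length ≤ I.length) : I = J :=
  List.Perm.eq_of_pairwise (fun _ _ _ _ h1 h2 => absurd (h1.trans h2) (lt_irrefl _)) hI hJ <|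
    (hI.nodup.subperm hIJ).perm_of_length_le hl

theorem eq_cons_of_mem {J : List ℕ} (hJ : Adm J) (hK : Adm (k :: K)) (hJK : J ⊆ k :: K)
    (hk : k ∈ J) : ∃ J', J = k :: J' ∧ J' ⊆ K := by
  obtain _ | ⟨j, J'⟩ := J
  · cases hk
  obtain rfl : j = k := by
    rcases List.mem_cons.mp (hJK List.mem_cons_self) with h | h
    · exact h
    rcases List.mem_cons.mp hk with h' | h'
    · exact h'.symm
    · exact absurd ((hK.lt_head j h).trans (hJ.lt_head k h')) (lt_irrefl _)
  exact ⟨J', rfl, fun b hb => (List.mem_cons.mp (hJK (List.mem_cons_of_mem _ hb))).resolve_left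
    (hJ.lt_head b hb).ne⟩

end Adm

namespace SimplicialSpace

/-- All levels at once: in `Σ n, X n` no casts between `X n` and `X m` for `n = m` are needed. -/
abbrev Tot (X : SimplicialSpace.{u}) : Type u := Σ n, X.X n

variable {X : SimplicialSpace.{u}}

def sT (X : SimplicialSpace.{u}) (i : ℕ) (p : X.Tot) : X.Tot := ⟨p.1 + 1, X.s p.1 i p.2⟩

/-- Face maps on `Tot`; the identity in degree `0`. -/
def dT (X : SimplicialSpace.{u}) (i : ℕ) : X.Tot → X.Tot
  | ⟨0, x⟩ => ⟨0, x⟩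
  | ⟨n + 1, x⟩ => ⟨n, X.d n i x⟩

@[simp] theorem sT_fst (i : ℕ) (p : X.Tot) : (X.sT i p).1 = p.1 + 1 := rfl

@[simp] theorem dT_fst (i : ℕ) (p : X.Tot) : (X.dT i p).1 = p.1 - 1 := by
  obtain ⟨_ | n, x⟩ := p <;> rfl

theorem continuous_sT (i : ℕ) : Continuous (X.sT i) :=
  continuous_sigma fun n => continuous_sigmaMk.comp (X.continuous_s n i)

theorem continuous_dT (i : ℕ) : Continuous (X.dT i) :=
  continuous_sigma fun
    | 0 => continuous_sigmaMk
    | n + 1 => continuous_sigmaMk.comp (X.continuous_d n i)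

theorem sT_sT {i j : ℕ} (hij : i ≤ j) (p : X.Tot) (hj : j ≤ p.1) :
    X.sT i (X.sT j p) = X.sT (j + 1) (X.sT i p) :=
  congrArg (Sigma.mk _) (X.ss p.1 i j hij hj p.2)

theorem dT_sT_self {j : ℕ} (p : X.Tot) (hj : j ≤ p.1) : X.dT j (X.sT j p) = p :=
  congrArg (Sigma.mk _) (X.ds_eq p.1 j hj p.2)

theorem dT_succ_sT_self {j : ℕ} (p : X.Tot) (hj : j ≤ p.1) : X.dT (j + 1) (X.sT j p) = p :=
  congrArg (Sigma.mk _) (X.ds_eq' p.1 j hj p.2)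

theorem dT_sT_of_lt {i j : ℕ} (hij : i < j) (p : X.Tot) (hj : j ≤ p.1) :
    X.dT i (X.sT j p) = X.sT (j - 1) (X.dT i p) := by
  obtain ⟨_ | n, x⟩ := p
  · exact absurd hj (by simp only; omega)
  · exact congrArg (Sigma.mk _) (X.ds_lt n i j hij hj x)

theorem dT_sT_of_succ_lt {i j : ℕ} (hij : j + 1 < i) (p : X.Tot) (hi : i ≤ p.1 + 1) :
    X.dT i (X.sT j p) = X.sT j (X.dT (i - 1) p) := by
  obtain ⟨_ | n, x⟩ := p
  · exact absurd hi (by simp only; omega)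
  · exact congrArg (Sigma.mk _) (X.ds_gt n i j hij hi x)

def sCompT (X : SimplicialSpace.{u}) (K : List ℕ) (p : X.Tot) : X.Tot :=
  ⟨p.1 + K.length, X.sComp K p.1 p.2⟩

@[simp] theorem sCompT_nil (p : X.Tot) : X.sCompT [] p = p := rfl

theorem sCompT_cons (k : ℕ) (K : List ℕ) (p : X.Tot) :
    X.sCompT (k :: K) p = X.sT k (X.sCompT K p) := rfl

@[simp] theorem sCompT_fst (K : List ℕ) (p : X.Tot) : (X.sCompT K p).1 = p.1 + K.length := rfl

theorem continuous_sCompT (K : List ℕ) : Continuous (X.sCompT K) := by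
  induction K with
  | nil => exact continuous_id
  | cons k K ih => exact (continuous_sT k).comp ih

/-- `dCompT E` applies the faces `d_e`, `e ∈ E`, head first. -/
def dCompT (X : SimplicialSpace.{u}) : List ℕ → X.Tot → X.Tot
  | [], p => p
  | e :: E, p => X.dCompT E (X.dT e p)

theorem continuous_dCompT (E : List ℕ) : Continuous (X.dCompT E) := by
  induction E with
  | nil => exact continuous_id
  | cons e E ih => exact ih.comp (continuous_dT e)

theorem dCompT_fst (E : List ℕ) (p : X.Tot) : (X.dCompT E p).1 = p.1 - E.length := by
  induction E generalizing p with
  | nil => rfl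
  | cons e E ih =>
      rw [dCompT, ih, dT_fst, List.length_cons]
      omega

def imSeqT (X : SimplicialSpace.{u}) (K : List ℕ) : Set X.Tot :=
  {p | ∃ q : X.Tot, ValidSeq K q.1 ∧ X.sCompT K q = p}

def filtT (X : SimplicialSpace.{u}) (t : ℕ) : Set X.Tot := {p | p.2 ∈ X.filtS t p.1}


theorem ValidSeq.of_adm {K : List ℕ} {m : ℕ} (hK : Adm K)
    (h : ∀ a ∈ K, a < m + K.length) : ValidSeq K m := by
  induction K with
  | nil => trivial
  | cons k K ih =>
      have hk := h k List.mem_cons_self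
      simp only [List.length_cons] at hk
      refine ⟨by omega, ih hK.of_cons fun a ha => ?_⟩
      have := hK.lt_head a ha
      omega

theorem ValidSeq.lt {K : List ℕ} {m : ℕ} (hv : ValidSeq K m) :
    ∀ a ∈ K, a < m + K.length := by
  induction K with
  | nil => simp
  | cons k K ih =>
      intro a ha
      rcases List.mem_cons.mp ha with rfl | ha
      · have := hv.1
        simp only [List.length_cons]
        omega
      · have := ih hv.2 a ha
        simp only [List.length_cons]
        omega

theorem mem_filtT_zero (p : X.Tot) : p ∈ X.filtT 0 := Set.mem_univ _

theorem sT_mem_filtT {t j : ℕ} {p : X.Tot} (hj : j ≤ p.1) (hp : p ∈ X.filtT t) :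
    X.sT j p ∈ X.filtT (t + 1) :=
  ⟨p.1, rfl, j, hj, p.2, hp, rfl⟩

theorem exists_sT_eq_of_mem_filtT_succ {t : ℕ} {p : X.Tot} (hp : p ∈ X.filtT (t + 1)) :
    ∃ q : X.Tot, ∃ j ≤ q.1, q ∈ X.filtT t ∧ X.sT j q = p := by
  obtain ⟨n, x⟩ := p
  obtain ⟨m, hm, i, hi, y, hy, hc⟩ := hp
  obtain rfl : m + 1 = n := hm
  exact ⟨⟨m, y⟩, i, hi, hy, congrArg (Sigma.mk _) hc⟩

theorem sCompT_mem_filtT {K : List ℕ} {t : ℕ} {q : X.Tot} (hv : ValidSeq K q.1)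
    (hq : q ∈ X.filtT t) : X.sCompT K q ∈ X.filtT (t + K.length) := by
  induction K with
  | nil => exact hq
  | cons k K ih => exact sT_mem_filtT (by simpa using hv.1) (ih hv.2)

theorem imSeqT_subset_filtT (K : List ℕ) : X.imSeqT K ⊆ X.filtT K.length := by
  rintro p ⟨q, hv, rfl⟩
  simpa using sCompT_mem_filtT hv (mem_filtT_zero q)

/-- Sorting a degeneracy into an admissible composite with the identity
`s_i s_k = s_{k+1} s_i` for `i ≤ k`. -/
theorem exists_adm_sCompT_eq_sT_sCompT (i : ℕ) {K : List ℕ} (hK : Adm K) (q : X.Tot)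
    (hv : ValidSeq K q.1) (hi : i ≤ q.1 + K.length) :
    ∃ M, Adm M ∧ M.length = K.length + 1 ∧ ValidSeq M q.1 ∧
      X.sCompT M q = X.sT i (X.sCompT K q) ∧
      ∀ a ∈ M, a ≤ i ∨ ∃ b ∈ K, a ≤ b + 1 := by
  induction K generalizing i with
  | nil => exact ⟨[i], List.pairwise_singleton _ i, rfl, ⟨by simpa using hi, trivial⟩, rfl,
      by simp⟩
  | cons k K ih =>
      by_cases hik : k < i
      · refine ⟨i :: k :: K, hK.cons fun b hb => ?_, rfl, ⟨by simpa using hi, hv⟩, rfl,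
          fun a ha => ?_⟩
        · rcases List.mem_cons.mp hb with rfl | hb
          · exact hik
          · exact (hK.lt_head b hb).trans hik
        · rcases List.mem_cons.mp ha with rfl | ha
          · exact Or.inl le_rfl
          · exact Or.inr ⟨a, ha, by omega⟩
      · have hkq : k ≤ q.1 + K.length := by simpa using hv.1
        obtain ⟨M, hMa, hMl, hMv, hMe, hMb⟩ := ih i hK.of_cons hv.2 (by omega)
        refine ⟨(k + 1) :: M, hMa.cons fun b hb => ?_, by simp [hMl], ⟨?_, hMv⟩, ?_,
          fun a ha => ?_⟩
        · rcases hMb b hb with hb | ⟨c, hc, hb⟩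
          · omega
          · have := hK.lt_head c hc
            omega
        · simp only [hMl]
          omega
        · rw [sCompT_cons, hMe, sCompT_cons]
          exact (sT_sT (by omega) _ (by simpa using hkq)).symm
        · rcases List.mem_cons.mp ha with rfl | ha
          · exact Or.inr ⟨k, List.mem_cons_self, le_rfl⟩
          · rcases hMb a ha with ha | ⟨c, hc, hac⟩
            · exact Or.inl ha
            · exact Or.inr ⟨c, List.mem_cons_of_mem _ hc, hac⟩

theorem exists_adm_of_mem_filtT {t : ℕ} {p : X.Tot} (hp : p ∈ X.filtT t) :
    ∃ K, Adm K ∧ K.length = t ∧ p ∈ X.imSeqT K := by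
  induction t generalizing p with
  | zero => exact ⟨[], List.Pairwise.nil, rfl, p, trivial, rfl⟩
  | succ t ih =>
      obtain ⟨q, j, hj, hq, rfl⟩ := exists_sT_eq_of_mem_filtT_succ hp
      obtain ⟨K, hKa, rfl, q, hv, rfl⟩ := ih hq
      obtain ⟨M, hMa, hMl, hMv, hMe, -⟩ :=
        exists_adm_sCompT_eq_sT_sCompT j hKa q hv (by simpa using hj)
      exact ⟨M, hMa, hMl, q, hMv, hMe⟩


theorem mem_imSeqT_singleton {j : ℕ} {p : X.Tot} :
    p ∈ X.imSeqT [j] ↔ ∃ q : X.Tot, j ≤ q.1 ∧ X.sT j q = p :=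
  ⟨fun ⟨q, hv, hq⟩ => ⟨q, by simpa using hv.1, hq⟩,
    fun ⟨q, hj, hq⟩ => ⟨q, ⟨by simpa using hj, trivial⟩, hq⟩⟩

theorem sT_sCompT_of_lt {K : List ℕ} {i : ℕ} (hK : Adm K) (hKi : ∀ k ∈ K, k < i) (q : X.Tot)
    (hv : ValidSeq K q.1) (hi : i ≤ q.1 + K.length) :
    X.sT i (X.sCompT K q) = X.sCompT K (X.sT (i - K.length) q) := by
  induction K generalizing i with
  | nil => simp
  | cons k K ih =>
      have hk := hKi k List.mem_cons_self
      simp only [List.length_cons] at hi ⊢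
      have hs := sT_sT (X := X) (i := k) (j := i - 1) (by omega) (X.sCompT K q) (by simp; omega)
      rw [Nat.sub_add_cancel (by omega)] at hs
      rw [sCompT_cons, ← hs, ih hK.of_cons (fun b hb => by have := hK.lt_head b hb; omega) hv.2
        (by omega), sCompT_cons, Nat.sub_sub, Nat.add_comm 1]

/-- If `J ⊆ K` are admissible, then `s_K = s_J ∘ s_{K'}` for some `K'`. -/
theorem imSeqT_subset_imSeqT {J K : List ℕ} (hJ : Adm J) (hK : Adm K) (hJK : J ⊆ K) :
    X.imSeqT K ⊆ X.imSeqT J := by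
  induction K generalizing J with
  | nil =>
      obtain rfl := List.subset_nil.mp hJK
      exact fun p _ => ⟨p, trivial, rfl⟩
  | cons k K ih =>
      rintro _ ⟨q, hv, rfl⟩
      have hkq : k ≤ q.1 + K.length := hv.1
      by_cases hkJ : k ∈ J
      · obtain ⟨J, rfl, hJK'⟩ := hJ.eq_cons_of_mem hK hJK hkJ
        obtain ⟨z, hz, hze⟩ := ih hJ.of_cons hK.of_cons hJK' ⟨q, hv.2, rfl⟩
        have hlev := congrArg Sigma.fst hze
        simp only [sCompT_fst] at hlev
        exact ⟨z, ⟨by omega, hz⟩, by rw [sCompT_cons, hze, sCompT_cons]⟩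
      · have hJK' : J ⊆ K := fun b hb =>
          (List.mem_cons.mp (hJK hb)).resolve_left fun h => hkJ (h ▸ hb)
        obtain ⟨z, hz, hze⟩ := ih hJ hK.of_cons hJK' ⟨q, hv.2, rfl⟩
        have hlev := congrArg Sigma.fst hze
        simp only [sCompT_fst] at hlev
        refine ⟨X.sT (k - J.length) z, ValidSeq.of_adm hJ fun a ha => ?_, ?_⟩
        · have := hz.lt a ha
          simp only [sT_fst]
          omega
        · rw [← sT_sCompT_of_lt hJ (fun b hb => hK.lt_head b (hJK' hb)) z hz (by omega), hze,
            sCompT_cons]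

theorem mem_imSeqT_singleton_of_mem {K : List ℕ} {j : ℕ} (hK : Adm K) (hj : j ∈ K)
    {p : X.Tot} (hp : p ∈ X.imSeqT K) : p ∈ X.imSeqT [j] :=
  imSeqT_subset_imSeqT (List.pairwise_singleton _ j) hK 
    (fun _ hb => List.eq_of_mem_singleton hb ▸ hj) hp


theorem mem_or_mem_filtT_of_sCompT_mem_imSeqT {K : List ℕ} {j : ℕ} (hK : Adm K) (q : X.Tot)
    (hv : ValidSeq K q.1) (hmem : X.sCompT K q ∈ X.imSeqT [j]) :
    j ∈ K ∨ q ∈ X.filtT 1 := by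
  induction K generalizing j with
  | nil =>
      obtain ⟨z, hz, hze⟩ := mem_imSeqT_singleton.mp hmem
      exact Or.inr ((hze.trans (sCompT_nil q)) ▸ sT_mem_filtT hz (mem_filtT_zero z))
  | cons k K ih =>
      obtain ⟨z, hjz, hze⟩ := mem_imSeqT_singleton.mp hmem
      have hlev : z.1 = q.1 + K.length := by
        have := congrArg Sigma.fst hze
        simp only [sT_fst, sCompT_fst, List.length_cons] at this
        omega
      have hkq : k ≤ q.1 + K.length := hv.1
      rcases lt_trichotomy j k with hjk | rfl | hjk
      · have hw : X.sCompT K q ∈ X.imSeqT [j] := by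
          rw [← dT_succ_sT_self (X.sCompT K q) hkq, ← sCompT_cons, ← hze,
            dT_sT_of_succ_lt (by omega) z (by omega)]
          exact mem_imSeqT_singleton.mpr ⟨_, by simp; omega, rfl⟩
        exact (ih hK.of_cons hv.2 hw).imp_left (List.mem_cons_of_mem _)
      · exact Or.inl List.mem_cons_self
      · have hw : X.sCompT K q ∈ X.imSeqT [j - 1] := by
          rw [← dT_sT_self (X.sCompT K q) hkq, ← sCompT_cons, ← hze, dT_sT_of_lt hjk z hjz]
          exact mem_imSeqT_singleton.mpr ⟨_, by simp; omega, rfl⟩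
        refine (ih hK.of_cons hv.2 hw).imp_left fun h => ?_
        have := hK.lt_head _ h
        omega

theorem mem_filtT_one_of_sCompT_mem_filtT {K : List ℕ} (hK : Adm K) (q : X.Tot)
    (hv : ValidSeq K q.1) (hmem : X.sCompT K q ∈ X.filtT (K.length + 1)) : q ∈ X.filtT 1 := by
  by_contra hq
  obtain ⟨M, hMa, hMl, hMmem⟩ := exists_adm_of_mem_filtT hmem
  have hMK : M ⊆ K := fun j hj =>
    (mem_or_mem_filtT_of_sCompT_mem_imSeqT hK q hv
      (mem_imSeqT_singleton_of_mem hMa hj hMmem)).resolve_right hq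
  have := (hMa.nodup.subperm hMK).length_le
  omega

theorem eq_of_mem_imSeqT {I J : List ℕ} (hI : Adm I) (hJ : Adm J) (hIJ : I.length = J.length)
    {p : X.Tot} (hpI : p ∈ X.imSeqT I) (hpJ : p ∈ X.imSeqT J)
    (hp : p ∉ X.filtT (I.length + 1)) : I = J := by
  refine hI.eq_of_subset hJ (fun a ha => ?_) hIJ.ge
  obtain ⟨q, hv, rfl⟩ := hpJ
  refine (mem_or_mem_filtT_of_sCompT_mem_imSeqT hJ q hv
    (mem_imSeqT_singleton_of_mem hI ha hpI)).resolve_right fun hq => hp ?_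
  simpa [hIJ, Nat.add_comm] using sCompT_mem_filtT hv hq

/-- The Eilenberg–Zilber lemma. -/
theorem exists_nondegenerate_sCompT_eq (p : X.Tot) :
    ∃ K q, Adm K ∧ ValidSeq K q.1 ∧ q ∉ X.filtT 1 ∧ X.sCompT K q = p := by
  induction h : p.1 using Nat.strong_induction_on generalizing p with
  | _ n ih =>
    by_cases hp : p ∈ X.filtT 1
    · obtain ⟨p', j, hj, -, rfl⟩ := exists_sT_eq_of_mem_filtT_succ hp
      obtain ⟨K, q, hK, hv, hq, rfl⟩ := ih p'.1 (by simp at h; omega) p' rfl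
      obtain ⟨M, hMa, -, hMv, hMe, -⟩ :=
        exists_adm_sCompT_eq_sT_sCompT j hK q hv (by simpa using hj)
      exact ⟨M, q, hMa, hMv, hq, hMe⟩
    · exact ⟨[], p, List.Pairwise.nil, trivial, hp, rfl⟩


theorem exists_dT_sT_eq (k j : ℕ) (hjk : j ≠ k) :
    ∃ e j' e', (∀ p : X.Tot, k ≤ p.1 → X.dT e (X.sT k p) = p) ∧
      (∀ w : X.Tot, j ≤ w.1 → k ≤ w.1 → X.dT e (X.sT j w) = X.sT j' (X.dT e' w)) ∧
      (∀ w : X.Tot, j ≤ w.1 → k ≤ w.1 → j' ≤ w.1 - 1) ∧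
      (j' = k ∨ j' = j ∨ k < j') := by
  rcases lt_or_gt_of_ne hjk with hjk | hjk
  · exact ⟨k + 1, j, k, fun p => dT_succ_sT_self p,
      fun w _ hk => dT_sT_of_succ_lt (by omega) w (by omega), fun _ _ _ => by omega,
      Or.inr (Or.inl rfl)⟩
  · by_cases hj : j = k + 1
    · subst hj
      exact ⟨k, k, k, fun p => dT_sT_self p, fun w hj _ => dT_sT_of_lt (by omega) w hj,
        fun _ _ _ => by omega, Or.inl rfl⟩
    · exact ⟨k + 1, j - 1, k + 1, fun p => dT_succ_sT_self p,
        fun w hj _ => dT_sT_of_lt (by omega) w hj, fun _ _ _ => by omega,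
        Or.inr (Or.inr (by omega))⟩

theorem exists_dCompT_retraction {K : List ℕ} (hK : Adm K) (j : ℕ) (hj : j ∉ K) :
    ∃ E : List ℕ, E.length = K.length ∧
      (∀ q : X.Tot, ValidSeq K q.1 → X.dCompT E (X.sCompT K q) = q) ∧
      ∀ w : X.Tot, j ≤ w.1 → (∀ k ∈ K, k ≤ w.1) →
        X.dCompT E (X.sT j w) ∈ X.filtT 1 := by
  induction K generalizing j with
  | nil => exact ⟨[], rfl, fun q _ => rfl, fun w hw _ => sT_mem_filtT hw (mem_filtT_zero w)⟩
  | cons k K ih =>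
      obtain ⟨e, j', e', hret, hcomm, hj'w, hj'⟩ :=
        exists_dT_sT_eq (X := X) k j fun h => hj (h ▸ List.mem_cons_self)
      have hj'K : j' ∉ K := fun h => by
        have := hK.lt_head j' h
        rcases hj' with rfl | rfl | hkj
        · omega
        · exact hj (List.mem_cons_of_mem _ h)
        · omega
      obtain ⟨E, hEl, hEret, hEdeg⟩ := ih hK.of_cons j' hj'K
      refine ⟨e :: E, by simp [hEl], fun q hv => ?_, fun w hjw hKw => ?_⟩
      · rw [sCompT_cons, dCompT, hret _ (by simpa using hv.1), hEret q hv.2]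
      · have hkw := hKw k List.mem_cons_self
        rw [dCompT, hcomm w hjw hkw]
        refine hEdeg _ (by simpa using hj'w w hjw hkw) fun b hb => ?_
        have := hK.lt_head b hb
        simp only [dT_fst]
        omega

theorem isClosed_filtT_succ (hX : X.SimpliciallyNDR) (t : ℕ) :
    IsClosed (((↑) : X.filtT t → X.Tot) ⁻¹' X.filtT (t + 1)) := by
  choose C hC hCeq using fun n => isClosed_induced_iff.mp (hX n t).isClosed
  refine isClosed_induced_iff.mpr ⟨{p | p.2 ∈ C p.1}, isClosed_sigma_iff.mpr hC, ?_⟩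
  ext ⟨⟨n, x⟩, hx⟩
  exact Set.ext_iff.mp (hCeq n) ⟨x, hx⟩


/-- `s_J(X_{n-r})` is closed in `X_n`: a point `s_K q` outside it (`q` nondegenerate) is
separated from it by the closed set where `s_K d_E` lands in `S^{r+1}`, `d_E` as in
`exists_dCompT_retraction` for some `j ∈ J \ K`. -/
theorem isClosed_imSeqT_slice
    (hF : ∀ t, IsClosed (((↑) : X.filtT t → X.Tot) ⁻¹' X.filtT (t + 1)))
    {J : List ℕ} (hJ : Adm J) (n : ℕ) : IsClosed (Sigma.mk n ⁻¹' X.imSeqT J) := by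
  rw [← closure_subset_iff_isClosed]
  intro x hx
  by_contra hxJ
  obtain ⟨K, q, hK, hv, hq, hqx⟩ := exists_nondegenerate_sCompT_eq (⟨n, x⟩ : X.Tot)
  obtain ⟨j, hjJ, hjK⟩ : ∃ j ∈ J, j ∉ K := by
    by_contra! hJK
    exact hxJ (imSeqT_subset_imSeqT hJ hK hJK ⟨q, hv, hqx⟩)
  obtain ⟨E, hEl, hEret, hEdeg⟩ := exists_dCompT_retraction (X := X) hK j hjK
  have hlev : q.1 + K.length = n := congrArg Sigma.fst hqx
  have hvalid (y : X.X n) : ValidSeq K (X.dCompT E ⟨n, y⟩).1 := by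
    rwa [dCompT_fst, hEl, show n - K.length = q.1 by omega]
  let Θ : X.X n → X.filtT K.length := fun y =>
    ⟨X.sCompT K (X.dCompT E ⟨n, y⟩),
      by simpa using sCompT_mem_filtT (hvalid y) (mem_filtT_zero _)⟩
  have hΘ : Continuous Θ := Continuous.subtype_mk ((continuous_sCompT K).comp
    ((continuous_dCompT E).comp continuous_sigmaMk)) _
  have hsep : Sigma.mk n ⁻¹' X.imSeqT J ⊆ Θ ⁻¹' ((↑) ⁻¹' X.filtT (K.length + 1)) := by
    intro y hy
    obtain ⟨w, hjw, hwy⟩ := mem_imSeqT_singleton.mp (mem_imSeqT_singleton_of_mem hJ hjJ hy)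
    have hwlev : w.1 + 1 = n := congrArg Sigma.fst hwy
    have hdeg : X.dCompT E ⟨n, y⟩ ∈ X.filtT 1 :=
      hwy ▸ hEdeg w hjw fun k hk => by have := hv.lt k hk; omega
    simpa [Nat.add_comm] using sCompT_mem_filtT (hvalid y) hdeg
  have hΘx : (Θ x : X.Tot) = ⟨n, x⟩ := by
    show X.sCompT K (X.dCompT E ⟨n, x⟩) = _
    rw [← hqx, hEret q hv]
  have hx' : (⟨n, x⟩ : X.Tot) ∉ X.filtT (K.length + 1) := fun h =>
    hq (mem_filtT_one_of_sCompT_mem_filtT hK q hv (hqx ▸ h))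
  exact hx' (hΘx ▸ closure_minimal hsep ((hF _).preimage hΘ) hx)

section Levels

variable {K : List ℕ} {n : ℕ} {h : K.length ≤ n}

theorem sigmaMk_sFromTo (y : X.X (n - K.length)) :
    (⟨n, X.sFromTo K n h y⟩ : X.Tot) = X.sCompT K ⟨n - K.length, y⟩ :=
  Sigma.ext (by simp [h]) (cast_heq _ _)

theorem exists_sFromTo_eq {q : X.Tot} {x : X.X n} (hq : X.sCompT K q = ⟨n, x⟩) :
    ∃ y, q = ⟨n - K.length, y⟩ ∧ X.sFromTo K n h y = x := by
  obtain ⟨m, y⟩ := q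
  obtain rfl : m = n - K.length := by have := congrArg Sigma.fst hq; simp at this; omega
  exact ⟨y, rfl, sigma_mk_injective ((sigmaMk_sFromTo y).trans hq)⟩

theorem mem_sImage_iff (hv : ValidSeq K (n - K.length)) {x : X.X n} :
    x ∈ X.sImage K n h ↔ (⟨n, x⟩ : X.Tot) ∈ X.imSeqT K := by
  constructor
  · rintro ⟨y, rfl⟩
    exact ⟨_, hv, (sigmaMk_sFromTo y).symm⟩
  · rintro ⟨q, -, hq⟩
    obtain ⟨y, -, hy⟩ := exists_sFromTo_eq (h := h) hq
    exact ⟨y, hy⟩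

theorem mem_sFromTo_image_filtS_one_iff (hv : ValidSeq K (n - K.length)) {x : X.X n} :
    x ∈ X.sFromTo K n h '' X.filtS 1 (n - K.length) ↔
      ∃ q ∈ X.filtT 1, ValidSeq K q.1 ∧ X.sCompT K q = ⟨n, x⟩ := by
  constructor
  · rintro ⟨y, hy, rfl⟩
    exact ⟨_, hy, hv, (sigmaMk_sFromTo y).symm⟩
  · rintro ⟨q, hq1, -, hq⟩
    obtain ⟨y, rfl, hy⟩ := exists_sFromTo_eq (h := h) hq
    exact ⟨y, hq1, hy⟩

end Levels

variable {Y : SimplicialSpace.{u}}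

theorem Hom.f_sComp (f : X.Hom Y) (K : List ℕ) (m : ℕ) (hv : ValidSeq K m) (y : X.X m) :
    f.f (m + K.length) (X.sComp K m y) = Y.sComp K m (f.f m y) := by
  induction K with
  | nil => rfl
  | cons k K ih => exact (f.comm_s _ k hv.1 _).trans (congrArg _ (ih hv.2))

theorem Hom.f_sFromTo (f : X.Hom Y) {K : List ℕ} {n : ℕ} {h : K.length ≤ n}
    (hv : ValidSeq K (n - K.length)) (y : X.X (n - K.length)) :
    f.f n (X.sFromTo K n h y) = Y.sFromTo K n h (f.f _ y) := by
  have hcast : ∀ {a b} (e : a = b) (z : X.X a),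
      f.f b (cast (congrArg X.X e) z) = cast (congrArg Y.X e) (f.f a z) := by
    rintro a _ rfl z
    rfl
  rw [sFromTo, sFromTo, hcast (Nat.sub_add_cancel h), f.f_sComp _ _ hv]

theorem Hom.f_mem_filtS (f : X.Hom Y) {t : ℕ} :
    ∀ {n : ℕ} {x : X.X n}, x ∈ X.filtS t n → f.f n x ∈ Y.filtS t n := by
  induction t with
  | zero => exact fun _ => trivial
  | succ t ih =>
      rintro n x ⟨m, hm, i, hi, y, hy, hc⟩
      obtain rfl : m + 1 = n := hm
      exact ⟨m, rfl, i, hi, f.f m y, ih hy, (f.comm_s m i hi y).symm.trans (congrArg _ hc)⟩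

end SimplicialSpace

namespace AdmSeq

variable {r n : ℕ}

theorem adm (J : AdmSeq r n) : Adm J.val := J.2.2.1

theorem length_le (J : AdmSeq r n) : J.val.length ≤ n := by
  obtain ⟨_ | ⟨k, K⟩, -, hJ, hlt⟩ := J
  · exact Nat.zero_le n
  · have := Adm.length_le hJ
    have := hlt k List.mem_cons_self
    simp only [List.length_cons]
    omega

theorem validSeq (J : AdmSeq r n) : SimplicialSpace.ValidSeq J.val (n - J.val.length) :=
  SimplicialSpace.ValidSeq.of_adm J.adm fun a ha => by have := J.2.2.2 a ha; omega

instance : Finite (AdmSeq r n) := by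
  refine Finite.of_injective (fun J : AdmSeq r n => {k : Fin n | k.val ∈ J.val}) ?_
  have hsub (I J : AdmSeq r n) (hIJ : {k : Fin n | k.val ∈ I.val} = {k | k.val ∈ J.val}) :
      I.val ⊆ J.val := fun a ha =>
    (Set.ext_iff.mp hIJ ⟨a, I.2.2.2 a ha⟩).mp ha
  intro I J hIJ
  exact Subtype.ext (I.adm.eq_of_subset J.adm (hsub I J hIJ) (by rw [I.2.1, J.2.1]))

end AdmSeq

namespace SimplicialSpace

variable {X : SimplicialSpace.{u}} {r n : ℕ}

theorem isWedgeDecomposition_sImage (hX : X.SimpliciallyNDR) :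
    IsWedgeDecomposition (X.filtS r n) (X.filtS (r + 1) n)
      (fun J : AdmSeq r n => X.sImage J.val n J.length_le)
      (fun J => X.sFromTo J.val n J.length_le '' X.filtS 1 (n - J.val.length)) where
  subset J x hx := by
    have := imSeqT_subset_filtT J.val ((mem_sImage_iff J.validSeq).mp hx)
    rwa [J.2.1] at this
  inter_eq J := by
    ext x
    rw [Set.mem_inter_iff, mem_sImage_iff J.validSeq, mem_sFromTo_image_filtS_one_iff J.validSeq]
    constructor
    · rintro ⟨⟨q, hv, hq⟩, hx⟩
      refine ⟨q, mem_filtT_one_of_sCompT_mem_filtT J.adm q hv ?_, hv, hq⟩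
      rw [hq, J.2.1]
      exact hx
    · rintro ⟨q, hq1, hv, hq⟩
      refine ⟨⟨q, hv, hq⟩, ?_⟩
      have := sCompT_mem_filtT hv hq1
      rwa [hq, Nat.add_comm, J.2.1] at this
  cover x hx := by
    obtain ⟨K, hK, hKl, q, hv, hq⟩ := exists_adm_of_mem_filtT (X := X) (p := ⟨n, x⟩) hx
    have hlev : q.1 + K.length = n := congrArg Sigma.fst hq
    let J : AdmSeq r n := ⟨K, hKl, hK, fun a ha => by have := hv.lt a ha; omega⟩
    exact Set.mem_iUnion.mpr ⟨J, (mem_sImage_iff J.validSeq).mpr ⟨q, hv, hq⟩⟩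
  inter_subset I J hIJ x hx := by
    by_contra hD
    refine hIJ (Subtype.ext (eq_of_mem_imSeqT I.adm J.adm (by rw [I.2.1, J.2.1])
      ((mem_sImage_iff I.validSeq).mp hx.1) ((mem_sImage_iff J.validSeq).mp hx.2) ?_))
    rwa [I.2.1]
  isClosed J := by
    refine IsClosed.preimage continuous_subtype_val ?_
    convert isClosed_imSeqT_slice (isClosed_filtT_succ hX) J.adm n
    ext x
    exact mem_sImage_iff J.validSeq

variable {Y : SimplicialSpace.{u}}

theorem fromWedge_natural (hX : X.SimpliciallyNDR) (hY : Y.SimpliciallyNDR) (f : X.Hom Y)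
    {g : ∀ J : AdmSeq r n,
      (X.sHat J.val n J.length_le).carrier → (Y.sHat J.val n J.length_le).carrier}
    {W : (Wedge fun J : AdmSeq r n => X.sHat J.val n J.length_le).carrier →
      (Wedge fun J : AdmSeq r n => Y.sHat J.val n J.length_le).carrier}
    {gq : (X.filtQuot n r).carrier → (Y.filtQuot n r).carrier}
    (hg : ∀ J : AdmSeq r n, SHatInduced f J.val n J.length_le (g J)) (hW : WedgeInduced _ _ g W)
    (hgq : FiltQuotInduced f n r gq)
    (z : (Wedge fun J : AdmSeq r n => X.sHat J.val n J.length_le).carrier) :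
    gq ((isWedgeDecomposition_sImage hX).fromWedge z) =
      (isWedgeDecomposition_sImage hY).fromWedge (W z) := by
  rcases wedgeCollapse_cases z with ⟨J, ⟨_, y, rfl⟩, rfl⟩ | rfl
  · erw [hW.1, (hg J).1]
    have hy := (isWedgeDecomposition_sImage hX).subset J ⟨y, rfl⟩
    refine (hgq.1 _ hy (f.f_mem_filtS hy)).trans ?_
    simp only [f.f_sFromTo J.validSeq]
    rfl
  · erw [hW.2]
    exact hgq.2

end SimplicialSpace

open SimplicialSpace in
/-- Let `X•` be a simplicial space which is simplicially NDR.  Then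
for `0 ≤ r ≤ n − 1` there is a homeomorphism
`γ(n,r) : ⋁_J ŝ_J(X_{n−r}) → S^r(X_n)/S^{r+1}(X_n)`, natural for morphisms of
simplicial spaces, where `J` ranges over the admissible sequences with `|J| = r`. -/
theorem wedge_sHat_homeomorphism (n r : ℕ) (hr : r + 1 ≤ n) :
    ∃ γ : ∀ (X : SimplicialSpace.{u}), X.SimpliciallyNDR →
        ((Wedge fun J : AdmSeq r n =>
            X.sHat J.val n (by rw [J.property.1]; omega)).carrier ≃ₜ
          (X.filtQuot n r).carrier),
      ∀ (X Y : SimplicialSpace.{u}) (hX : X.SimpliciallyNDR) (hY : Y.SimpliciallyNDR)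
        (f : X.Hom Y)
        (g : ∀ J : AdmSeq r n,
          (X.sHat J.val n (by rw [J.property.1]; omega)).carrier →
          (Y.sHat J.val n (by rw [J.property.1]; omega)).carrier)
        (W : (Wedge fun J : AdmSeq r n =>
                X.sHat J.val n (by rw [J.property.1]; omega)).carrier →
             (Wedge fun J : AdmSeq r n =>
                Y.sHat J.val n (by rw [J.property.1]; omega)).carrier)
        (gq : (X.filtQuot n r).carrier → (Y.filtQuot n r).carrier),
        (∀ J : AdmSeq r n,
          SHatInduced f J.val n (by rw [J.property.1]; omega) (g J)) →
        WedgeInduced _ _ g W →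
        FiltQuotInduced f n r gq →
        ∀ z, gq (γ X hX z) = γ Y hY (W z) :=
  ⟨fun _ hX => (isWedgeDecomposition_sImage hX).homeomorph,
    fun _ _ hX hY f _ _ _ hg hW hgq => fromWedge_natural hX hY f hg hW hgq⟩
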